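/- Let A be a Banach algebra, X a Banach A-bimodule, δ ≥ 0, p, q ≥ 0 with 0 < p + q < 3, and f : A → X with f(0) = 0 satisfy ‖f(2a+b) + f(2a−b) − 2f(a+b) − 2f(a−b) − 12f(a)‖ ≤ δ‖a‖^p‖b‖^q and ‖f(ab) − f(a)·b³ − a³·f(b)‖ ≤ δ‖a‖^p‖b‖^q for all a, b ∈ A. Then f itself satisfies the exact cubic functional equation and f(ab) = f(a)·b³ + a³·f(b) for all a, b ∈ A. -/

import Mathlib

/-!
The Hyers sequence `8⁻ⁿ • f (2ⁿ • a)` is Cauchy, because the cubic inequality at `b = 0` gives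
`‖f (2 • a) - 8 • f a‖ ≤ (δ / 2) ‖a‖ ^ p` and `2 ^ p < 8`; let `g` be its limit. Scaling both
inputs of the cubic inequality, and the first input of the derivation inequality, by `2ⁿ` and
dividing by `8ⁿ` shows that `g` is an exact cubic map (the error shrinks like
`(2 ^ (p + q) / 8)ⁿ`) and that
`g (a * b) = b³ • g a + a³ • f b` (error `(2 ^ p / 8)ⁿ`). Taking `a = 1` and `b = 2ᵐ • 1` and using
`g (2ᵐ • x) = 8ᵐ • g x` gives `f (2ᵐ • 1) = 0` for all `m`, hence `g 1 = 0`; then `a = 1` yields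
`g = f`, so `f` inherits both exact identities.
-/

open Filter Topology MulOpposite

lemma two_rpow_div_eight_lt_one {s : ℝ} (hs : s < 3) : (2 : ℝ) ^ s / 8 < 1 := by
  have := Real.rpow_lt_rpow_of_exponent_lt (by norm_num : (1 : ℝ) < 2) hs
  norm_num at this
  exact (div_lt_one (by norm_num)).2 this

lemma norm_two_pow_nsmul_rpow {E : Type*} [NormedAddCommGroup E] [NormedSpace ℝ E]
    (n : ℕ) (a : E) (p : ℝ) : ‖(2 ^ n : ℕ) • a‖ ^ p = (2 ^ p) ^ n * ‖a‖ ^ p := by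
  rw [RCLike.norm_nsmul ℝ, nsmul_eq_mul, Real.mul_rpow (by positivity) (norm_nonneg a)]
  push_cast
  rw [← Real.rpow_natCast, ← Real.rpow_mul zero_le_two, mul_comm (n : ℝ),
    Real.rpow_mul zero_le_two, Real.rpow_natCast]

lemma eq_zero_of_tendsto_of_norm_le_geometric {X : Type*} [NormedAddCommGroup X] {u : ℕ → X}
    {L : X} (hu : Tendsto u atTop (𝓝 L)) {C r : ℝ} (hr₀ : 0 ≤ r) (hr₁ : r < 1)
    (h : ∀ n, ‖u n‖ ≤ C * r ^ n) : L = 0 :=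
  tendsto_nhds_unique hu <| squeeze_zero_norm h <| by
    simpa using (tendsto_pow_atTop_nhds_zero_of_lt_one hr₀ hr₁).const_mul C

lemma two_pow_nsmul_cube {A : Type*} [NonUnitalNonAssocSemiring A] (n : ℕ) (a : A) :
    ((2 ^ n : ℕ) • a) * ((2 ^ n : ℕ) • a) * ((2 ^ n : ℕ) • a) = (8 ^ n : ℕ) • (a * a * a) := by
  simp only [smul_mul_assoc, mul_smul_comm, smul_smul, ← mul_pow]
  norm_num

noncomputable def cubicSeq {E X : Type*} [AddMonoid E] [AddCommMonoid X] [Module ℂ X]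
    (f : E → X) (n : ℕ) (a : E) : X :=
  ((8 ^ n : ℕ) : ℂ)⁻¹ • f ((2 ^ n : ℕ) • a)

noncomputable def cubicLimit {E X : Type*} [AddMonoid E] [AddCommMonoid X] [Module ℂ X]
    [TopologicalSpace X] (f : E → X) (a : E) : X :=
  limUnder atTop fun n => cubicSeq f n a

def cubicDefect {E X : Type*} [AddCommGroup E] [Module ℂ E] [AddCommGroup X] [Module ℂ X]
    (f : E → X) (a b : E) : X :=
  f ((2 : ℂ) • a + b) + f ((2 : ℂ) • a - b) - (2 : ℂ) • f (a + b) - (2 : ℂ) • f (a - b)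
    - (12 : ℂ) • f a

def cubicDerivationDefect {A X : Type*} [Ring A] [AddCommGroup X] [Module A X] [Module Aᵐᵒᵖ X]
    (f : A → X) (a b : A) : X :=
  f (a * b) - op (b * b * b) • f a - (a * a * a) • f b

section Algebraic

variable {E X : Type*} [AddCommGroup X] [Module ℂ X]

lemma cubicSeq_sub_cubicSeq_succ [AddMonoid E] (f : E → X) (n : ℕ) (a : E) :
    cubicSeq f n a - cubicSeq f (n + 1) a
      = ((8 ^ (n + 1) : ℕ) : ℂ)⁻¹ • ((8 : ℂ) • f ((2 ^ n : ℕ) • a) - f (2 • (2 ^ n : ℕ) • a)) := by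
  have h8 : ((8 ^ (n + 1) : ℕ) : ℂ)⁻¹ * 8 = ((8 ^ n : ℕ) : ℂ)⁻¹ := by
    push_cast; field_simp; ring
  rw [cubicSeq, cubicSeq, smul_sub, smul_smul, h8, pow_succ' 2, mul_smul]

lemma cubicSeq_two_pow_nsmul [AddMonoid E] (f : E → X) (n m : ℕ) (a : E) :
    cubicSeq f n ((2 ^ m : ℕ) • a) = ((8 ^ m : ℕ) : ℂ) • cubicSeq f (n + m) a := by
  rw [cubicSeq, cubicSeq, smul_smul, smul_smul, ← pow_add]
  congr 1
  push_cast
  field_simp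
  ring

lemma cubicDefect_zero_right [AddCommGroup E] [Module ℂ E] (f : E → X) (a : E) :
    cubicDefect f a 0 = (2 : ℂ) • (f (2 • a) - (8 : ℂ) • f a) := by
  simp only [cubicDefect, add_zero, sub_zero, two_smul ℂ a, two_nsmul]
  module

lemma cubicDefect_cubicSeq [AddCommGroup E] [Module ℂ E] (f : E → X) (n : ℕ) (a b : E) :
    cubicDefect (cubicSeq f n) a b
      = ((8 ^ n : ℕ) : ℂ)⁻¹ • cubicDefect f ((2 ^ n : ℕ) • a) ((2 ^ n : ℕ) • b) := by
  simp only [cubicDefect, cubicSeq, smul_add, smul_sub, smul_comm (2 ^ n : ℕ) (2 : ℂ) a]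
  module

lemma cubicSeq_mul_sub {A : Type*} [Ring A] [Module A X] [Module Aᵐᵒᵖ X] (f : A → X) (n : ℕ)
    (a b : A) :
    cubicSeq f n (a * b) - op (b * b * b) • cubicSeq f n a - (a * a * a) • f b
      = ((8 ^ n : ℕ) : ℂ)⁻¹ • cubicDerivationDefect f ((2 ^ n : ℕ) • a) b := by
  have h8 : ((8 ^ n : ℕ) : ℂ) ≠ 0 := Nat.cast_ne_zero.2 (by positivity)
  rw [cubicDerivationDefect, two_pow_nsmul_cube, smul_mul_assoc, smul_assoc, smul_sub, smul_sub,
    ← Nat.cast_smul_eq_nsmul ℂ (8 ^ n) ((a * a * a) • f b), smul_smul, inv_mul_cancel₀ h8,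
    one_smul, cubicSeq, cubicSeq]
  congr 2
  -- No compatibility between the `Aᵐᵒᵖ`- and `ℂ`-actions is assumed, but an additive map
  -- commutes with `(n : ℂ)⁻¹ • ·` anyway.
  exact map_inv_natCast_smul (DistribSMul.toAddMonoidHom X (op (b * b * b))) ℂ ℂ (8 ^ n)
    (f ((2 ^ n : ℕ) • a))

end Algebraic

section Analytic

variable {E A X : Type*} [NormedAddCommGroup X] [NormedSpace ℂ X] {δ p q : ℝ}

lemma cauchySeq_cubicSeq [NormedAddCommGroup E] [NormedSpace ℝ E] {f : E → X} {C : ℝ}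
    (hp : p < 3) (hf : ∀ a, ‖f (2 • a) - (8 : ℂ) • f a‖ ≤ C * ‖a‖ ^ p) (a : E) :
    CauchySeq fun n => cubicSeq f n a := by
  refine cauchySeq_of_le_geometric (2 ^ p / 8) (C / 8 * ‖a‖ ^ p)
    (two_rpow_div_eight_lt_one hp) fun n => ?_
  rw [dist_eq_norm, cubicSeq_sub_cubicSeq_succ, norm_smul, norm_sub_rev]
  calc _ ≤ ‖((8 ^ (n + 1) : ℕ) : ℂ)⁻¹‖ * (C * ‖(2 ^ n : ℕ) • a‖ ^ p) := by gcongr; exact hf _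
    _ = C / 8 * ‖a‖ ^ p * (2 ^ p / 8) ^ n := by
      rw [norm_two_pow_nsmul_rpow, div_pow]
      simp only [Nat.cast_pow, Nat.cast_ofNat, norm_inv, norm_pow, Complex.norm_ofNat]
      field_simp
      ring

lemma tendsto_cubicSeq [NormedAddCommGroup E] [NormedSpace ℝ E] [CompleteSpace X] {f : E → X}
    {C : ℝ} (hp : p < 3) (hf : ∀ a, ‖f (2 • a) - (8 : ℂ) • f a‖ ≤ C * ‖a‖ ^ p) (a : E) :
    Tendsto (fun n => cubicSeq f n a) atTop (𝓝 (cubicLimit f a)) :=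
  (cauchySeq_cubicSeq hp hf a).tendsto_limUnder

lemma norm_apply_two_nsmul_sub_le [NormedAddCommGroup E] [NormedSpace ℂ E] {f : E → X}
    (hδ : 0 ≤ δ) (hf : ∀ a b, ‖cubicDefect f a b‖ ≤ δ * (‖a‖ ^ p * ‖b‖ ^ q)) (a : E) :
    ‖f (2 • a) - (8 : ℂ) • f a‖ ≤ δ / 2 * ‖a‖ ^ p :=
  calc ‖f (2 • a) - (8 : ℂ) • f a‖ = ‖cubicDefect f a 0‖ / 2 := by
        rw [cubicDefect_zero_right, norm_smul]; norm_num
    _ ≤ δ * (‖a‖ ^ p * ‖(0 : E)‖ ^ q) / 2 := by gcongr; exact hf a 0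
    _ ≤ δ / 2 * ‖a‖ ^ p := by
        rw [norm_zero, mul_div_right_comm]
        gcongr
        -- `0 ^ q` is `1`, not `0`, when `q = 0`.
        exact mul_le_of_le_one_right (by positivity) (Real.zero_rpow_le_one q)

lemma apply_two_pow_nsmul_of_tendsto_cubicSeq [AddMonoid E] {f g : E → X}
    (hg : ∀ a, Tendsto (fun n => cubicSeq f n a) atTop (𝓝 (g a))) (m : ℕ) (a : E) :
    g ((2 ^ m : ℕ) • a) = ((8 ^ m : ℕ) : ℂ) • g a := by
  refine tendsto_nhds_unique (hg _) ?_
  simp_rw [cubicSeq_two_pow_nsmul]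
  exact ((tendsto_add_atTop_iff_nat m).2 (hg a)).const_smul _

lemma cubicDefect_eq_zero_of_tendsto_cubicSeq [NormedAddCommGroup E] [NormedSpace ℂ E]
    {f g : E → X} (hg : ∀ a, Tendsto (fun n => cubicSeq f n a) atTop (𝓝 (g a)))
    (hpq : p + q < 3) (hf : ∀ a b, ‖cubicDefect f a b‖ ≤ δ * (‖a‖ ^ p * ‖b‖ ^ q)) (a b : E) :
    cubicDefect g a b = 0 := by
  refine eq_zero_of_tendsto_of_norm_le_geometric (u := fun n => cubicDefect (cubicSeq f n) a b)
    ?_ (C := δ * (‖a‖ ^ p * ‖b‖ ^ q)) (by positivity) (two_rpow_div_eight_lt_one hpq) fun n => ?_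
  · exact ((((hg _).add (hg _)).sub ((hg _).const_smul _)).sub ((hg _).const_smul _)).sub
      ((hg _).const_smul _)
  · rw [cubicDefect_cubicSeq, norm_smul]
    calc _ ≤ ‖((8 ^ n : ℕ) : ℂ)⁻¹‖ * (δ * (‖(2 ^ n : ℕ) • a‖ ^ p * ‖(2 ^ n : ℕ) • b‖ ^ q)) := by
          gcongr; exact hf _ _
      _ = δ * (‖a‖ ^ p * ‖b‖ ^ q) * (2 ^ (p + q) / 8) ^ n := by
          rw [norm_two_pow_nsmul_rpow, norm_two_pow_nsmul_rpow, Real.rpow_add two_pos, div_pow,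
            mul_pow]
          simp only [Nat.cast_pow, Nat.cast_ofNat, norm_inv, norm_pow, Complex.norm_ofNat]
          field_simp

variable [NormedRing A] [NormedSpace ℝ A] [Module A X] [Module Aᵐᵒᵖ X]
  [ContinuousConstSMul Aᵐᵒᵖ X]

lemma apply_mul_of_tendsto_cubicSeq {f g : A → X}
    (hg : ∀ a, Tendsto (fun n => cubicSeq f n a) atTop (𝓝 (g a))) (hp : p < 3)
    (hf : ∀ a b, ‖cubicDerivationDefect f a b‖ ≤ δ * (‖a‖ ^ p * ‖b‖ ^ q)) (a b : A) :
    g (a * b) = op (b * b * b) • g a + (a * a * a) • f b := by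
  rw [← sub_eq_zero, ← sub_sub]
  refine eq_zero_of_tendsto_of_norm_le_geometric
    (((hg _).sub ((hg a).const_smul _)).sub tendsto_const_nhds)
    (C := δ * (‖a‖ ^ p * ‖b‖ ^ q)) (by positivity) (two_rpow_div_eight_lt_one hp) fun n => ?_
  rw [cubicSeq_mul_sub, norm_smul]
  calc _ ≤ ‖((8 ^ n : ℕ) : ℂ)⁻¹‖ * (δ * (‖(2 ^ n : ℕ) • a‖ ^ p * ‖b‖ ^ q)) := by
        gcongr; exact hf _ _
    _ = δ * (‖a‖ ^ p * ‖b‖ ^ q) * (2 ^ p / 8) ^ n := by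
        rw [norm_two_pow_nsmul_rpow, div_pow]
        simp only [Nat.cast_pow, Nat.cast_ofNat, norm_inv, norm_pow, Complex.norm_ofNat]
        field_simp

lemma eq_of_tendsto_cubicSeq {f g : A → X}
    (hg : ∀ a, Tendsto (fun n => cubicSeq f n a) atTop (𝓝 (g a))) (hp : p < 3)
    (hf : ∀ a b, ‖cubicDerivationDefect f a b‖ ≤ δ * (‖a‖ ^ p * ‖b‖ ^ q)) : g = f := by
  have hmul := apply_mul_of_tendsto_cubicSeq hg hp hf
  have hf_two_pow : ∀ m, f ((2 ^ m : ℕ) • 1) = 0 := fun m => by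
    have h := hmul 1 ((2 ^ m : ℕ) • 1)
    rw [one_mul, apply_two_pow_nsmul_of_tendsto_cubicSeq hg, two_pow_nsmul_cube] at h
    simp only [mul_one, op_smul, op_one, smul_assoc, one_smul, Nat.cast_smul_eq_nsmul] at h
    exact left_eq_add.1 h
  have hg_one : g 1 = 0 := tendsto_nhds_unique (hg 1) <| by
    simpa only [cubicSeq, hf_two_pow, smul_zero] using tendsto_const_nhds
  funext b
  simpa [hg_one] using hmul 1 b

end Analytic

theorem cubic_derivation_superstability_general {A X : Type*}
    [NormedRing A] [NormedAlgebra ℂ A]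
    [NormedAddCommGroup X] [NormedSpace ℂ X] [CompleteSpace X]
    [Module A X] [Module Aᵐᵒᵖ X]
    [IsBoundedSMul Aᵐᵒᵖ X]
    (δ p q : ℝ) (hδ : 0 ≤ δ) (hq : 0 ≤ q)
    (hpq3 : p + q < 3)
    (f : A → X)
    (hf1 : ∀ a b : A,
      ‖f ((2 : ℂ) • a + b) + f ((2 : ℂ) • a - b) - (2 : ℂ) • f (a + b)
        - (2 : ℂ) • f (a - b) - (12 : ℂ) • f a‖ ≤ δ * (‖a‖ ^ p * ‖b‖ ^ q))
    (hf2 : ∀ a b : A,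
      ‖f (a * b) - MulOpposite.op (b * b * b) • f a - (a * a * a) • f b‖
        ≤ δ * (‖a‖ ^ p * ‖b‖ ^ q)) :
    (∀ a b : A, f ((2 : ℂ) • a + b) + f ((2 : ℂ) • a - b)
      = (2 : ℂ) • f (a + b) + (2 : ℂ) • f (a - b) + (12 : ℂ) • f a) ∧
    (∀ a b : A, f (a * b) = MulOpposite.op (b * b * b) • f a + (a * a * a) • f b) := by
  have hp : p < 3 := by linarith
  have hg := tendsto_cubicSeq hp (norm_apply_two_nsmul_sub_le hδ hf1)
  have hfg : cubicLimit f = f := eq_of_tendsto_cubicSeq hg hp hf2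
  refine ⟨fun a b => ?_, fun a b => ?_⟩
  · have h := cubicDefect_eq_zero_of_tendsto_cubicSeq hg hpq3 hf1 a b
    rw [hfg, cubicDefect] at h
    rw [← sub_eq_zero, ← h]
    abel
  · simpa [hfg] using apply_mul_of_tendsto_cubicSeq hg hp hf2 a b

theorem cubic_derivation_superstability {A X : Type*}
    [NormedRing A] [NormedAlgebra ℂ A] [CompleteSpace A]
    [NormedAddCommGroup X] [NormedSpace ℂ X] [CompleteSpace X]
    [Module A X] [Module Aᵐᵒᵖ X] [SMulCommClass A Aᵐᵒᵖ X]
    [IsBoundedSMul A X] [IsBoundedSMul Aᵐᵒᵖ X]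
    (δ p q : ℝ) (hδ : 0 ≤ δ) (hp : 0 ≤ p) (hq : 0 ≤ q)
    (hpq0 : 0 < p + q) (hpq3 : p + q < 3)
    (f : A → X) (hf0 : f 0 = 0)
    (hf1 : ∀ a b : A,
      ‖f ((2 : ℂ) • a + b) + f ((2 : ℂ) • a - b) - (2 : ℂ) • f (a + b)
        - (2 : ℂ) • f (a - b) - (12 : ℂ) • f a‖ ≤ δ * (‖a‖ ^ p * ‖b‖ ^ q))
    (hf2 : ∀ a b : A,
      ‖f (a * b) - MulOpposite.op (b * b * b) • f a - (a * a * a) • f b‖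
        ≤ δ * (‖a‖ ^ p * ‖b‖ ^ q)) :
    (∀ a b : A, f ((2 : ℂ) • a + b) + f ((2 : ℂ) • a - b)
      = (2 : ℂ) • f (a + b) + (2 : ℂ) • f (a - b) + (12 : ℂ) • f a) ∧
    (∀ a b : A, f (a * b) = MulOpposite.op (b * b * b) • f a + (a * a * a) • f b) :=
  cubic_derivation_superstability_general δ p q hδ hq hpq3 f hf1 hf2
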